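/- The first component A_x of the quantum Laplace–Runge–Lenz vector commutes with the Schrödinger operator H of the two-dimensional hydrogen atom: for every function f : ℝ² → ℂ that is C^∞ on S = ℝ² \ {0} and every p ∈ S, one has H(A_x f)(p) = A_x(H f)(p). -/

import Mathlib

noncomputable section

open Complex

/-- `S = ℝ² \ {0}`. -/
def S : Set (ℝ × ℝ) := {p | p ≠ 0}

/-- Partial derivative in the first coordinate. -/
def pdx (f : ℝ × ℝ → ℂ) (p : ℝ × ℝ) : ℂ := fderiv ℝ f p (1, 0)

/-- Partial derivative in the second coordinate. -/
def pdy (f : ℝ × ℝ → ℂ) (p : ℝ × ℝ) : ℂ := fderiv ℝ f p (0, 1)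

/-- `r(x,y) = √(x² + y²)`. -/
def rr (p : ℝ × ℝ) : ℝ := Real.sqrt (p.1 ^ 2 + p.2 ^ 2)

/-- Angular momentum operator: `(Lf)(p) = y·∂ₓf(p) − x·∂_yf(p)`. -/
def Lop (f : ℝ × ℝ → ℂ) (p : ℝ × ℝ) : ℂ := (p.2 : ℂ) * pdx f p - (p.1 : ℂ) * pdy f p

/-- Schrödinger operator of the 2D hydrogen atom. -/
def Hop (k : ℝ) (f : ℝ × ℝ → ℂ) (p : ℝ × ℝ) : ℂ :=
  -(1 / 2 : ℂ) * (pdx (pdx f) p + pdy (pdy f) p) - ((k / rr p : ℝ) : ℂ) * f p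

/-- First component of the quantum Laplace–Runge–Lenz vector. -/
def Axop (k : ℝ) (f : ℝ × ℝ → ℂ) (p : ℝ × ℝ) : ℂ :=
  (Complex.I / (Real.sqrt 2 : ℂ)) *
    ((p.1 : ℂ) * pdy (pdy f) p - (p.2 : ℂ) * pdx (pdy f) p - (1 / 2 : ℂ) * pdx f p
      + ((k * p.1 / rr p : ℝ) : ℂ) * f p)

/-- Second component of the quantum Laplace–Runge–Lenz vector. -/
def Ayop (k : ℝ) (f : ℝ × ℝ → ℂ) (p : ℝ × ℝ) : ℂ :=
  (Complex.I / (Real.sqrt 2 : ℂ)) *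
    ((p.2 : ℂ) * pdx (pdx f) p - (p.1 : ℂ) * pdx (pdy f) p - (1 / 2 : ℂ) * pdy f p
      + ((k * p.2 / rr p : ℝ) : ℂ) * f p)

/-! Expand both sides with the Leibniz rule for first and second derivatives on the open set `S`,
using `∂ᵥ(1/r) = -(v · p)/r³`, and bring every mixed partial of `f` to the form `∂ₓᵃ ∂_yᵇ f`
by symmetry of second derivatives. The terms free of `k` then cancel identically, which is the
statement `[Δ, x∂²_y − y∂ₓ∂_y − ½∂ₓ] = 0`, and the terms linear in `k` cancel after using
`x² + y² = r²`. -/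

open Set
open scoped ContDiff

section DirDeriv

variable {E : Type*} [NormedAddCommGroup E] [NormedSpace ℝ E] {s : Set E} {g h : E → ℂ} {x : E}

def dirDeriv (v : E) (g : E → ℂ) (x : E) : ℂ := fderiv ℝ g x v

theorem dirDeriv_const (c : ℂ) (v : E) : dirDeriv v (fun _ => c) = fun _ => 0 := by
  ext
  simp [dirDeriv]

theorem dirDeriv_add (hg : DifferentiableAt ℝ g x) (hh : DifferentiableAt ℝ h x) (v : E) :
    dirDeriv v (fun y => g y + h y) x = dirDeriv v g x + dirDeriv v h x := by
  simp [dirDeriv, fderiv_fun_add hg hh]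

theorem dirDeriv_sub (hg : DifferentiableAt ℝ g x) (hh : DifferentiableAt ℝ h x) (v : E) :
    dirDeriv v (fun y => g y - h y) x = dirDeriv v g x - dirDeriv v h x := by
  simp [dirDeriv, fderiv_fun_sub hg hh]

theorem dirDeriv_mul (hg : DifferentiableAt ℝ g x) (hh : DifferentiableAt ℝ h x) (v : E) :
    dirDeriv v (fun y => g y * h y) x = dirDeriv v g x * h x + g x * dirDeriv v h x := by
  simp [dirDeriv, fderiv_fun_mul hg hh]
  ring

theorem dirDeriv_comm (hg : ContDiffAt ℝ 2 g x) (v w : E) :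
    dirDeriv v (dirDeriv w g) x = dirDeriv w (dirDeriv v g) x := by
  have hdiff : DifferentiableAt ℝ (fderiv ℝ g) x :=
    (hg.fderiv_right (m := 1) le_rfl).differentiableAt one_ne_zero
  have hsnd : ∀ a b : E, dirDeriv a (dirDeriv b g) x = fderiv ℝ (fderiv ℝ g) x a b := fun a b => by
    change fderiv ℝ (fun y => fderiv ℝ g y b) x a = _
    simp [fderiv_clm_apply hdiff (differentiableAt_const b)]
  rw [hsnd, hsnd, hg.isSymmSndFDerivAt (by simp)]

theorem ContDiffOn.dirDeriv (hs : IsOpen s) (hg : ContDiffOn ℝ ∞ g s) (v : E) :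
    ContDiffOn ℝ ∞ (dirDeriv v g) s :=
  (hg.fderiv_of_isOpen hs (by simp)).clm_apply contDiffOn_const

theorem differentiableAt_of_contDiffOn (hs : IsOpen s) (hx : x ∈ s) (hg : ContDiffOn ℝ ∞ g s) :
    DifferentiableAt ℝ g x :=
  (hg.differentiableOn (by simp)).differentiableAt (hs.mem_nhds hx)

theorem Set.EqOn.dirDeriv (hs : IsOpen s) (hgh : EqOn g h s) (v : E) :
    EqOn (dirDeriv v g) (dirDeriv v h) s := fun _ hy => by
  simp only [_root_.dirDeriv, (Filter.eventuallyEq_of_mem (hs.mem_nhds hy) hgh).fderiv_eq]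

theorem eqOn_dirDeriv_comm (hs : IsOpen s) (hg : ContDiffOn ℝ ∞ g s) (v w : E) :
    EqOn (dirDeriv v (dirDeriv w g)) (dirDeriv w (dirDeriv v g)) s := fun _ hy =>
  dirDeriv_comm ((hg.contDiffAt (hs.mem_nhds hy)).of_le (WithTop.coe_le_coe.mpr le_top)) v w

theorem dirDeriv_comm_of_contDiffOn (hs : IsOpen s) (hx : x ∈ s) (hg : ContDiffOn ℝ ∞ g s)
    (v w : E) : dirDeriv v (dirDeriv w g) x = dirDeriv w (dirDeriv v g) x :=
  eqOn_dirDeriv_comm hs hg v w hx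

theorem dirDeriv_dirDeriv_comm_of_contDiffOn (hs : IsOpen s) (hx : x ∈ s)
    (hg : ContDiffOn ℝ ∞ g s) (u v w : E) :
    dirDeriv u (dirDeriv v (dirDeriv w g)) x = dirDeriv u (dirDeriv w (dirDeriv v g)) x :=
  (eqOn_dirDeriv_comm hs hg v w).dirDeriv hs u hx

theorem dirDeriv_dirDeriv_dirDeriv_comm_of_contDiffOn (hs : IsOpen s) (hx : x ∈ s)
    (hg : ContDiffOn ℝ ∞ g s) (t u v w : E) :
    dirDeriv t (dirDeriv u (dirDeriv v (dirDeriv w g))) x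
      = dirDeriv t (dirDeriv u (dirDeriv w (dirDeriv v g))) x :=
  ((eqOn_dirDeriv_comm hs hg v w).dirDeriv hs u).dirDeriv hs t hx

theorem dirDeriv_dirDeriv_add (hs : IsOpen s) (hx : x ∈ s) (hg : ContDiffOn ℝ ∞ g s)
    (hh : ContDiffOn ℝ ∞ h s) (v w : E) :
    dirDeriv v (dirDeriv w (fun y => g y + h y)) x
      = dirDeriv v (dirDeriv w g) x + dirDeriv v (dirDeriv w h) x := by
  have hw : EqOn (dirDeriv w (fun y => g y + h y)) (fun y => dirDeriv w g y + dirDeriv w h y) s :=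
    fun _ hy => dirDeriv_add (differentiableAt_of_contDiffOn hs hy hg)
      (differentiableAt_of_contDiffOn hs hy hh) w
  rw [hw.dirDeriv hs v hx, dirDeriv_add (differentiableAt_of_contDiffOn hs hx (hg.dirDeriv hs w))
    (differentiableAt_of_contDiffOn hs hx (hh.dirDeriv hs w)) v]

theorem dirDeriv_dirDeriv_sub (hs : IsOpen s) (hx : x ∈ s) (hg : ContDiffOn ℝ ∞ g s)
    (hh : ContDiffOn ℝ ∞ h s) (v w : E) :
    dirDeriv v (dirDeriv w (fun y => g y - h y)) x
      = dirDeriv v (dirDeriv w g) x - dirDeriv v (dirDeriv w h) x := by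
  have hw : EqOn (dirDeriv w (fun y => g y - h y)) (fun y => dirDeriv w g y - dirDeriv w h y) s :=
    fun _ hy => dirDeriv_sub (differentiableAt_of_contDiffOn hs hy hg)
      (differentiableAt_of_contDiffOn hs hy hh) w
  rw [hw.dirDeriv hs v hx, dirDeriv_sub (differentiableAt_of_contDiffOn hs hx (hg.dirDeriv hs w))
    (differentiableAt_of_contDiffOn hs hx (hh.dirDeriv hs w)) v]

theorem dirDeriv_dirDeriv_mul (hs : IsOpen s) (hx : x ∈ s) (hg : ContDiffOn ℝ ∞ g s)
    (hh : ContDiffOn ℝ ∞ h s) (v w : E) :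
    dirDeriv v (dirDeriv w (fun y => g y * h y)) x
      = dirDeriv v (dirDeriv w g) x * h x + dirDeriv w g x * dirDeriv v h x
        + dirDeriv v g x * dirDeriv w h x + g x * dirDeriv v (dirDeriv w h) x := by
  have hg' := fun {y} (hy : y ∈ s) => differentiableAt_of_contDiffOn hs hy hg
  have hh' := fun {y} (hy : y ∈ s) => differentiableAt_of_contDiffOn hs hy hh
  have hgw' := differentiableAt_of_contDiffOn hs hx (hg.dirDeriv hs w)
  have hhw' := differentiableAt_of_contDiffOn hs hx (hh.dirDeriv hs w)
  have hw : EqOn (dirDeriv w (fun y => g y * h y))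
      (fun y => dirDeriv w g y * h y + g y * dirDeriv w h y) s :=
    fun _ hy => dirDeriv_mul (hg' hy) (hh' hy) w
  rw [hw.dirDeriv hs v hx, dirDeriv_add (hgw'.fun_mul (hh' hx)) ((hg' hx).fun_mul hhw'),
    dirDeriv_mul hgw' (hh' hx), dirDeriv_mul (hg' hx) hhw']
  ring

end DirDeriv

theorem isOpen_S : IsOpen S := isOpen_compl_singleton

theorem sq_add_sq_ne_zero_of_mem_S {p : ℝ × ℝ} (hp : p ∈ S) : p.1 ^ 2 + p.2 ^ 2 ≠ 0 := by
  intro h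
  obtain ⟨h1, h2⟩ := (add_eq_zero_iff_of_nonneg (sq_nonneg _) (sq_nonneg _)).mp h
  exact hp (Prod.ext (pow_eq_zero_iff two_ne_zero |>.mp h1) (pow_eq_zero_iff two_ne_zero |>.mp h2))

theorem rr_ne_zero {p : ℝ × ℝ} (hp : p ∈ S) : rr p ≠ 0 :=
  Real.sqrt_ne_zero'.mpr (lt_of_le_of_ne (by positivity) (sq_add_sq_ne_zero_of_mem_S hp).symm)

theorem rr_sq (p : ℝ × ℝ) : rr p ^ 2 = p.1 ^ 2 + p.2 ^ 2 := Real.sq_sqrt (by positivity)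

def coordX (p : ℝ × ℝ) : ℂ := p.1
def coordY (p : ℝ × ℝ) : ℂ := p.2
def invR (p : ℝ × ℝ) : ℂ := ((rr p)⁻¹ : ℝ)

theorem contDiff_coordX : ContDiff ℝ ∞ coordX := ofRealCLM.contDiff.comp contDiff_fst
theorem contDiff_coordY : ContDiff ℝ ∞ coordY := ofRealCLM.contDiff.comp contDiff_snd

theorem contDiffOn_invR : ContDiffOn ℝ ∞ invR S := by
  have hrr : ContDiffOn ℝ ∞ rr S := fun p hp =>
    ((Real.contDiffAt_sqrt (sq_add_sq_ne_zero_of_mem_S hp)).comp p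
      ((contDiff_fst.pow 2).add (contDiff_snd.pow 2)).contDiffAt).contDiffWithinAt
  exact ofRealCLM.contDiff.comp_contDiffOn (hrr.inv fun _ hq => rr_ne_zero hq)

theorem dirDeriv_coordX (v : ℝ × ℝ) : dirDeriv v coordX = fun _ => (v.1 : ℂ) := by
  ext
  rw [dirDeriv, show coordX = ofRealCLM.comp (ContinuousLinearMap.fst ℝ ℝ ℝ) from rfl,
    ContinuousLinearMap.fderiv]
  simp

theorem dirDeriv_coordY (v : ℝ × ℝ) : dirDeriv v coordY = fun _ => (v.2 : ℂ) := by
  ext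
  rw [dirDeriv, show coordY = ofRealCLM.comp (ContinuousLinearMap.snd ℝ ℝ ℝ) from rfl,
    ContinuousLinearMap.fderiv]
  simp

theorem dirDeriv_invR {p : ℝ × ℝ} (hp : p ∈ S) (v : ℝ × ℝ) :
    dirDeriv v invR p = -((v.1 * p.1 + v.2 * p.2 : ℝ) : ℂ) * invR p ^ 3 := by
  have hsq : HasFDerivAt (fun q : ℝ × ℝ => q.1 ^ 2 + q.2 ^ 2) _ p :=
    ((hasFDerivAt_fst (𝕜 := ℝ)).pow 2).add ((hasFDerivAt_snd (𝕜 := ℝ)).pow 2)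
  have hinv : HasFDerivAt invR _ p := ofRealCLM.hasFDerivAt.comp p
    ((hasDerivAt_inv (rr_ne_zero hp)).comp_hasFDerivAt p (hsq.sqrt (sq_add_sq_ne_zero_of_mem_S hp)))
  have hrr : √(p.1 ^ 2 + p.2 ^ 2) = rr p := rfl
  rw [dirDeriv, hinv.fderiv]
  simp [invR, hrr]
  field_simp
  ring

theorem dirDeriv_dirDeriv_invR {p : ℝ × ℝ} (hp : p ∈ S) (v w : ℝ × ℝ) :
    dirDeriv v (dirDeriv w invR) p = -((v.1 * w.1 + v.2 * w.2 : ℝ) : ℂ) * invR p ^ 3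
      + 3 * ((w.1 * p.1 + w.2 * p.2 : ℝ) : ℂ) * ((v.1 * p.1 + v.2 * p.2 : ℝ) : ℂ) * invR p ^ 5 := by
  have hw : EqOn (dirDeriv w invR)
      (fun q => (-(w.1 : ℂ) * coordX q - w.2 * coordY q) * (invR q * (invR q * invR q))) S :=
    fun q hq => by
      rw [dirDeriv_invR hq w]
      simp only [coordX, coordY]
      push_cast
      ring
  have hX : DifferentiableAt ℝ coordX p := contDiff_coordX.differentiable (by simp) p
  have hY : DifferentiableAt ℝ coordY p := contDiff_coordY.differentiable (by simp) p
  have hU : DifferentiableAt ℝ invR p := differentiableAt_of_contDiffOn isOpen_S hp contDiffOn_invR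
  rw [hw.dirDeriv isOpen_S v hp]
  simp (disch := fun_prop) only [dirDeriv_mul, dirDeriv_sub, dirDeriv_const, dirDeriv_coordX,
    dirDeriv_coordY, dirDeriv_invR hp]
  simp only [coordX, coordY]
  push_cast
  ring

theorem sq_add_sq_mul_invR_sq {p : ℝ × ℝ} (hp : p ∈ S) :
    ((p.1 : ℂ) ^ 2 + (p.2 : ℂ) ^ 2) * invR p ^ 2 = 1 := by
  have h : (p.1 ^ 2 + p.2 ^ 2) * (rr p)⁻¹ ^ 2 = 1 := by
    rw [← rr_sq]
    field_simp [rr_ne_zero hp]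
  rw [invR]
  exact_mod_cast h

theorem pdx_eq_dirDeriv : pdx = dirDeriv (1, 0) := rfl
theorem pdy_eq_dirDeriv : pdy = dirDeriv (0, 1) := rfl

theorem Axop_eq_dirDeriv (k : ℝ) (f : ℝ × ℝ → ℂ) : Axop k f = fun q =>
    (I / (Real.sqrt 2 : ℂ)) *
      (coordX q * dirDeriv (0, 1) (dirDeriv (0, 1) f) q - coordY q * dirDeriv (1, 0) (dirDeriv (0, 1) f) q
        - (1 / 2 : ℂ) * dirDeriv (1, 0) f q + (k : ℂ) * (coordX q * (invR q * f q))) := by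
  funext q
  simp only [Axop, pdx_eq_dirDeriv, pdy_eq_dirDeriv, coordX, coordY, invR]
  push_cast
  ring

theorem Hop_eq_dirDeriv (k : ℝ) (f : ℝ × ℝ → ℂ) : Hop k f = fun q =>
    -(1 / 2 : ℂ) * (dirDeriv (1, 0) (dirDeriv (1, 0) f) q + dirDeriv (0, 1) (dirDeriv (0, 1) f) q)
      - (k : ℂ) * (invR q * f q) := by
  funext q
  simp only [Hop, pdx_eq_dirDeriv, pdy_eq_dirDeriv, invR]
  push_cast
  ring

theorem stmt_1_general (k : ℝ) (f : ℝ × ℝ → ℂ)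
    (hf : ContDiffOn ℝ (⊤ : ℕ∞) f S) (p : ℝ × ℝ) (hp : p ∈ S) :
    Hop k (Axop k f) p = Axop k (Hop k f) p := by
  rw [Hop_eq_dirDeriv, Axop_eq_dirDeriv, Axop_eq_dirDeriv, Hop_eq_dirDeriv]
  -- The commutation rules, instantiated at `(0, 1), (1, 0)`, move `∂ₓ` outward, so every
  -- partial derivative of `f` ends up in the normal form `∂ₓᵃ ∂_yᵇ f`.
  simp (maxDischargeDepth := 100) only [dirDeriv_dirDeriv_mul isOpen_S hp,
    dirDeriv_dirDeriv_add isOpen_S hp, dirDeriv_dirDeriv_sub isOpen_S hp, dirDeriv_mul,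
    dirDeriv_add, dirDeriv_sub, dirDeriv_const, dirDeriv_coordX, dirDeriv_coordY,
    dirDeriv_invR hp, dirDeriv_dirDeriv_invR hp,
    (dirDeriv_comm_of_contDiffOn isOpen_S hp · (0, 1) (1, 0)),
    (dirDeriv_dirDeriv_comm_of_contDiffOn isOpen_S hp · · (0, 1) (1, 0)),
    (dirDeriv_dirDeriv_dirDeriv_comm_of_contDiffOn isOpen_S hp · · · (0, 1) (1, 0)),
    differentiableAt_of_contDiffOn isOpen_S hp, ContDiffOn.mul, ContDiffOn.add, ContDiffOn.sub,
    ContDiffOn.dirDeriv isOpen_S, contDiffOn_const, hf, contDiffOn_invR,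
    contDiff_coordX.contDiffOn, contDiff_coordY.contDiffOn]
  simp only [coordX, coordY]
  push_cast
  linear_combination (I / (Real.sqrt 2 : ℂ)) *
    (-(3 / 2 : ℂ) * k * p.1 * invR p ^ 3 * f p + k * invR p * dirDeriv (1, 0) f p)
      * sq_add_sq_mul_invR_sq hp

/-- The first component `A_x` of the quantum Laplace–Runge–Lenz vector commutes with
the Schrödinger operator `H` of the two-dimensional hydrogen atom, pointwise on `S`. -/
theorem stmt_1 (k : ℝ) (hk : 0 < k) (f : ℝ × ℝ → ℂ)
    (hf : ContDiffOn ℝ (⊤ : ℕ∞) f S) (p : ℝ × ℝ) (hp : p ∈ S) :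
    Hop k (Axop k f) p = Axop k (Hop k f) p :=
  stmt_1_general k f hf p hp
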